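/- arXiv:1804.02795 — 5 statements merged into one kernel-verified Lean document; each statement's English description precedes it below -/
import Mathlib

section
/- Let (G,p) be a framework in ℝ^d with n vertices, let T_r=(V,E_tr) be a spanning tree of G, and let T* be a set of triples (i,j,k) with (i,j),(i,k) ∈ E_tr. Stack the tree edge vectors as e_tr = (…, e_{ij}ᵀ, …)ᵀ ∈ ℝ^{(n−1)d}, (i,j) ∈ E_tr, and view r_{T_r} = (…, e_{ij}ᵀ e_{ik}, …)ᵀ, (i,j,k) ∈ T*, as a function of e_tr; let R_e^{tr} = ∂r_{T_r}/∂e_tr be its Jacobian evaluated at the edge vectors of (T_r,p). If rank R_e^{tr} = nd − d(d+1)/2, then (G,p) is infinitesimally weakly rigid. -/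
open RealInnerProductSpace Topology

/-- The rank of the Jacobian of `f` at `x`. -/
noncomputable def jacRank {E F : Type*} [NormedAddCommGroup E] [NormedSpace ℝ E]
    [NormedAddCommGroup F] [NormedSpace ℝ F] (f : E → F) (x : E) : ℕ :=
  Module.finrank ℝ (LinearMap.range (fderiv ℝ f x).toLinearMap)

open Classical in
/-- The weak rigidity function: components `⟪p i - p j, p i - p k⟫` for triples
`(i,j,k) ∈ T` (components outside `T` are constantly `0`, so they do not affect
the rank of the Jacobian). -/
noncomputable def weakRigidityFun {n d : ℕ} (T : Set (Fin n × Fin n × Fin n))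
    (p : Fin n → EuclideanSpace ℝ (Fin d)) : Fin n × Fin n × Fin n → ℝ :=
  fun t => if t ∈ T then ⟪p t.1 - p t.2.1, p t.1 - p t.2.2⟫ else 0

/-- A valid set of triples for the graph `G`: each `(i,j,k) ∈ T` satisfies
`(i,j), (i,k) ∈ E` and `j ≤ k`. -/
def ValidTriples {n : ℕ} (G : SimpleGraph (Fin n)) (T : Set (Fin n × Fin n × Fin n)) : Prop :=
  ∀ t ∈ T, G.Adj t.1 t.2.1 ∧ G.Adj t.1 t.2.2 ∧ t.2.1 ≤ t.2.2

/-- `(G,p)` is infinitesimally weakly rigid: for some valid triple set `T`, the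
weak rigidity matrix (Jacobian of the weak rigidity function) has rank
`n*d - d*(d+1)/2` (stated without natural subtraction as `rank + d(d+1)/2 = nd`). -/
def IsInfWeaklyRigid {n d : ℕ} (G : SimpleGraph (Fin n))
    (p : Fin n → EuclideanSpace ℝ (Fin d)) : Prop :=
  ∃ T : Set (Fin n × Fin n × Fin n), ValidTriples G T ∧
    jacRank (weakRigidityFun T) p + d * (d + 1) / 2 = n * d

open Classical in
/-- The (distance) rigidity function: components `‖p i - p j‖²` for edges of `G`
(components for non-edges are constantly `0`, so they do not affect the rank of
the Jacobian). -/
noncomputable def rigidityFun {n d : ℕ} (G : SimpleGraph (Fin n))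
    (p : Fin n → EuclideanSpace ℝ (Fin d)) : Fin n × Fin n → ℝ :=
  fun e => if G.Adj e.1 e.2 then ‖p e.1 - p e.2‖ ^ 2 else 0

/-- Evaluation of an assignment `x` of vectors to the (canonically oriented) edges of
`Tr` at an ordered pair `(i,j)`: `x` at the edge if `i < j`, minus `x` at the reversed
edge if `j < i`, and `0` if `i,j` are not adjacent. -/
noncomputable def edgeVecAt {n d : ℕ} (Tr : SimpleGraph (Fin n)) [DecidableRel Tr.Adj]
    (x : {e : Fin n × Fin n // Tr.Adj e.1 e.2 ∧ e.1 < e.2} → EuclideanSpace ℝ (Fin d))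
    (i j : Fin n) : EuclideanSpace ℝ (Fin d) :=
  if h : Tr.Adj i j ∧ i < j then x ⟨(i, j), h⟩
  else if h' : Tr.Adj j i ∧ j < i then - x ⟨(j, i), h'⟩
  else 0

section Aux

variable {n d : ℕ} (Tr : SimpleGraph (Fin n)) [DecidableRel Tr.Adj]


variable {n d : ℕ} (Tr : SimpleGraph (Fin n)) [DecidableRel Tr.Adj]

/-- Stacking map from positions to tree edge vectors. -/
noncomputable def edgeStack :
    (Fin n → EuclideanSpace ℝ (Fin d)) →L[ℝ]
      ({e : Fin n × Fin n // Tr.Adj e.1 e.2 ∧ e.1 < e.2} → EuclideanSpace ℝ (Fin d)) :=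
  ContinuousLinearMap.pi fun e =>
    (ContinuousLinearMap.proj e.1.1 : (Fin n → EuclideanSpace ℝ (Fin d)) →L[ℝ] _)
      - ContinuousLinearMap.proj e.1.2

@[simp] lemma edgeStack_apply (p : Fin n → EuclideanSpace ℝ (Fin d))
    (e : {e : Fin n × Fin n // Tr.Adj e.1 e.2 ∧ e.1 < e.2}) :
    edgeStack Tr p e = p e.1.1 - p e.1.2 := by
  simp [edgeStack]

/-- `edgeVecAt` as a continuous linear map. -/
noncomputable def evA (i j : Fin n) :
    ({e : Fin n × Fin n // Tr.Adj e.1 e.2 ∧ e.1 < e.2} → EuclideanSpace ℝ (Fin d)) →L[ℝ]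
      EuclideanSpace ℝ (Fin d) :=
  if h : Tr.Adj i j ∧ i < j then ContinuousLinearMap.proj ⟨(i, j), h⟩
  else if h' : Tr.Adj j i ∧ j < i then - ContinuousLinearMap.proj ⟨(j, i), h'⟩
  else 0

lemma edgeVecAt_eq_evA (x) (i j : Fin n) :
    edgeVecAt (d := d) Tr x i j = evA Tr i j x := by
  unfold edgeVecAt evA
  split_ifs <;> rfl

lemma evA_edgeStack {i j : Fin n} (h : Tr.Adj i j) (p : Fin n → EuclideanSpace ℝ (Fin d)) :
    evA Tr i j (edgeStack Tr p) = p i - p j := by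
  unfold evA
  rcases lt_or_gt_of_ne h.ne with hlt | hgt
  · rw [dif_pos ⟨h, hlt⟩, ContinuousLinearMap.proj_apply, edgeStack_apply]
  · rw [dif_neg (fun hc => absurd hc.2 (not_lt.2 hgt.le)), dif_pos ⟨h.symm, hgt⟩,
      ContinuousLinearMap.neg_apply, ContinuousLinearMap.proj_apply, edgeStack_apply, neg_sub]

lemma card_edges (htree : Tr.IsTree) :
    Fintype.card {e : Fin n × Fin n // Tr.Adj e.1 e.2 ∧ e.1 < e.2} + 1 = n := by
  classical
  have hbij : Function.Bijective
      (fun e : {e : Fin n × Fin n // Tr.Adj e.1 e.2 ∧ e.1 < e.2} =>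
        (⟨s(e.1.1, e.1.2), e.2.1⟩ : Tr.edgeSet)) := by
    constructor
    · rintro ⟨⟨a, b⟩, ⟨hab, hlt⟩⟩ ⟨⟨c, f⟩, ⟨hcf, hlt'⟩⟩ h
      replace h := Sym2.eq_iff.mp (congrArg Subtype.val h : s(a, b) = s(c, f))
      simp only [Subtype.mk.injEq, Sym2.eq, Sym2.rel_iff', Prod.mk.injEq, Prod.swap_prod_mk] at h ⊢
      rcases h with ⟨rfl, rfl⟩ | ⟨rfl, rfl⟩
      · exact ⟨rfl, rfl⟩
      · exact absurd (hlt.trans hlt') (lt_irrefl _)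
    · rintro ⟨e, he⟩
      revert he
      refine Sym2.ind (fun a b he => ?_) e
      have hadj : Tr.Adj a b := Tr.mem_edgeSet.mp he
      rcases lt_trichotomy a b with hlt | heq | hgt
      · exact ⟨⟨(a, b), hadj, hlt⟩, rfl⟩
      · exact absurd heq hadj.ne
      · exact ⟨⟨(b, a), hadj.symm, hgt⟩, by simp [Sym2.eq_swap]⟩
  rw [Fintype.card_of_bijective hbij]
  rw [show Fintype.card Tr.edgeSet = Tr.edgeFinset.card from (Set.toFinset_card _).symm]
  rw [htree.card_edgeFinset, Fintype.card_fin]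

lemma edgeStack_surjective (htree : Tr.IsTree) :
    Function.Surjective (edgeStack (d := d) Tr) := by
  classical
  have hconn := htree.isConnected
  have hne : Nonempty (Fin n) := hconn.nonempty
  set L : (Fin n → EuclideanSpace ℝ (Fin d)) →ₗ[ℝ] _ := (edgeStack (d := d) Tr).toLinearMap
    with hL
  -- kernel is the constants
  let C : EuclideanSpace ℝ (Fin d) →ₗ[ℝ] (Fin n → EuclideanSpace ℝ (Fin d)) :=
    LinearMap.pi fun _ => LinearMap.id
  have hker : LinearMap.ker L = LinearMap.range C := by
    ext q
    constructor
    · intro hq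
      have hz := LinearMap.mem_ker.mp hq
      have heq : ∀ i j : Fin n, Tr.Adj i j → q i = q j := by
        intro i j hadj
        rcases lt_or_gt_of_ne hadj.ne with hlt | hgt
        · have := congrFun hz ⟨(i, j), hadj, hlt⟩
          simpa [hL, sub_eq_zero] using this
        · have := congrFun hz ⟨(j, i), hadj.symm, hgt⟩
          have h2 : q j - q i = 0 := by simpa [hL] using this
          exact (sub_eq_zero.mp h2).symm
      have hall : ∀ i j : Fin n, q i = q j := by
        intro i j
        obtain ⟨w⟩ := hconn.preconnected i j
        induction w with
        | nil => rfl
        | cons hadj _ ih => exact (heq _ _ hadj).trans ih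
      exact ⟨q (Classical.arbitrary _), funext fun i => hall _ i⟩
    · rintro ⟨v, rfl⟩
      refine LinearMap.mem_ker.mpr (funext fun e => ?_)
      simp [hL, C]
  have hCinj : Function.Injective C := by
    intro v w h
    exact congrFun h (Classical.arbitrary _)
  have hkerrank : Module.finrank ℝ (LinearMap.ker L) = d := by
    rw [hker, LinearMap.finrank_range_of_inj hCinj, finrank_euclideanSpace, Fintype.card_fin]
  have hrn := LinearMap.finrank_range_add_finrank_ker L
  rw [hkerrank] at hrn
  have hdom : Module.finrank ℝ (Fin n → EuclideanSpace ℝ (Fin d)) = n * d := by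
    simp [Module.finrank_pi_fintype, finrank_euclideanSpace]
  have hrn' : Module.finrank ℝ (LinearMap.range L) + d = n * d := by
    rw [← hdom]; exact hrn
  have hcodom : Module.finrank ℝ
      ({e : Fin n × Fin n // Tr.Adj e.1 e.2 ∧ e.1 < e.2} → EuclideanSpace ℝ (Fin d))
      = Fintype.card {e : Fin n × Fin n // Tr.Adj e.1 e.2 ∧ e.1 < e.2} * d := by
    simp [Module.finrank_pi_fintype, finrank_euclideanSpace]
  have hmul : Fintype.card {e : Fin n × Fin n // Tr.Adj e.1 e.2 ∧ e.1 < e.2} * d + d = n * d := by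
    have hc := congrArg (· * d) (card_edges Tr htree)
    simpa [add_mul] using hc
  have hr2 : Module.finrank ℝ (LinearMap.range L) =
      Fintype.card {e : Fin n × Fin n // Tr.Adj e.1 e.2 ∧ e.1 < e.2} * d :=
    Nat.add_right_cancel (hrn'.trans hmul.symm)
  have hrange : Module.finrank ℝ (LinearMap.range L) =
      Module.finrank ℝ ({e : Fin n × Fin n // Tr.Adj e.1 e.2 ∧ e.1 < e.2} →
        EuclideanSpace ℝ (Fin d)) := hr2.trans hcodom.symm
  have htop : LinearMap.range L = ⊤ := Submodule.eq_top_of_finrank_eq hrange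
  exact LinearMap.range_eq_top.mp htop

end Aux

open Classical in
/-- Let `Tr` be a spanning tree of `G` and `T` a set of triples over
`Tr`'s edges. View the weak rigidity function of the tree as a function of the stacked
edge vectors `e_tr`; if its Jacobian `R_e^{tr}` at the edge vectors of `(Tr,p)` has rank
`n*d - d*(d+1)/2`, then `(G,p)` is infinitesimally weakly rigid. -/
theorem stmt2 {n d : ℕ} (G Tr : SimpleGraph (Fin n)) [DecidableRel Tr.Adj]
    (hsub : Tr ≤ G) (htree : Tr.IsTree)
    (T : Set (Fin n × Fin n × Fin n)) (hT : ValidTriples Tr T)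
    (p : Fin n → EuclideanSpace ℝ (Fin d))
    (hrank :
      jacRank
        (fun x : {e : Fin n × Fin n // Tr.Adj e.1 e.2 ∧ e.1 < e.2} → EuclideanSpace ℝ (Fin d) =>
          fun t : Fin n × Fin n × Fin n =>
            if t ∈ T then ⟪edgeVecAt Tr x t.1 t.2.1, edgeVecAt Tr x t.1 t.2.2⟫ else 0)
        (fun e => p e.1.1 - p e.1.2) + d * (d + 1) / 2 = n * d) :
    IsInfWeaklyRigid G p := by
  classical
  refine ⟨T, fun t ht => ⟨hsub (hT t ht).1, hsub (hT t ht).2.1, (hT t ht).2.2⟩, ?_⟩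
  set g := (fun x : {e : Fin n × Fin n // Tr.Adj e.1 e.2 ∧ e.1 < e.2} → EuclideanSpace ℝ (Fin d) =>
      fun t : Fin n × Fin n × Fin n =>
        if t ∈ T then ⟪edgeVecAt Tr x t.1 t.2.1, edgeVecAt Tr x t.1 t.2.2⟫ else (0:ℝ)) with hg
  have hpt : (fun e : {e : Fin n × Fin n // Tr.Adj e.1 e.2 ∧ e.1 < e.2} => p e.1.1 - p e.1.2)
      = edgeStack Tr p := by
    funext e; rw [edgeStack_apply]
  have hcomp : weakRigidityFun T = g ∘ (edgeStack Tr) := by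
    funext q t
    simp only [weakRigidityFun, Function.comp_apply, hg]
    by_cases ht : t ∈ T
    · obtain ⟨h1, h2, -⟩ := hT t ht
      rw [if_pos ht, if_pos ht, edgeVecAt_eq_evA, edgeVecAt_eq_evA,
        evA_edgeStack Tr h1, evA_edgeStack Tr h2]
    · rw [if_neg ht, if_neg ht]
  have hgdiff : ∀ y, DifferentiableAt ℝ g y := by
    intro y
    rw [differentiableAt_pi]
    intro t
    by_cases ht : t ∈ T
    · have : (fun x => g x t) = fun x => ⟪evA (d := d) Tr t.1 t.2.1 x, evA Tr t.1 t.2.2 x⟫ := by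
        funext x
        rw [hg]
        simp only [if_pos ht, edgeVecAt_eq_evA]
      rw [this]
      exact ((evA Tr t.1 t.2.1).differentiableAt).inner ℝ ((evA Tr t.1 t.2.2).differentiableAt)
    · have : (fun x => g x t) = fun _ => (0:ℝ) := by
        funext x; rw [hg]; simp only [if_neg ht]
      rw [this]
      exact differentiableAt_const 0
  have hfd : fderiv ℝ (weakRigidityFun T) p
      = (fderiv ℝ g (edgeStack Tr p)).comp (edgeStack Tr) := by
    rw [hcomp]
    rw [fderiv_comp p (hgdiff _) ((edgeStack Tr).differentiableAt),
      (edgeStack Tr).fderiv]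
  have hr : jacRank (weakRigidityFun T) p = jacRank g (edgeStack Tr p) := by
    unfold jacRank
    rw [hfd]
    have hsurj : Function.Surjective ((edgeStack (d := d) Tr).toLinearMap) :=
      edgeStack_surjective Tr htree
    rw [ContinuousLinearMap.toLinearMap_comp, LinearMap.range_comp,
      LinearMap.range_eq_top.mpr hsurj, Submodule.map_top]
  rw [hr, ← hpt]
  exact hrank
end

section
/- Let G=(V,E) be a connected graph and let p,q be two configurations of its n vertices in ℝ^d. Then ‖p_i−p_j‖ = ‖q_i−q_j‖ for all i,j ∈ V if and only if (p_i−p_j)ᵀ(p_k−p_l) = (q_i−q_j)ᵀ(q_k−q_l) for all pairs of edges (i,j),(k,l) ∈ E. (The Euclidean distance matrix of p equals that of q if and only if the Gram matrix of the edge displacement vectors of p equals that of q.) -/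
open RealInnerProductSpace Topology

lemma polar9 {d : ℕ} (a b c e : EuclideanSpace ℝ (Fin d)) :
    ⟪a - b, c - e⟫ = (‖a - e‖^2 + ‖b - c‖^2 - ‖a - c‖^2 - ‖b - e‖^2)/2 := by
  simp only [norm_sub_sq_real, inner_sub_left, inner_sub_right]
  ring

lemma auxA9 {n d : ℕ} {G : SimpleGraph (Fin n)} {p q : Fin n → EuclideanSpace ℝ (Fin d)}
    (H : ∀ i j k l : Fin n, G.Adj i j → G.Adj k l →
        ⟪p i - p j, p k - p l⟫ = ⟪q i - q j, q k - q l⟫)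
    {k l : Fin n} (hkl : G.Adj k l) {i j : Fin n} (w : G.Walk i j) :
    ⟪p i - p j, p k - p l⟫ = ⟪q i - q j, q k - q l⟫ := by
  induction w with
  | nil => simp
  | @cons a b c h w ih =>
    have hp : p a - p c = (p a - p b) + (p b - p c) := by abel
    have hq : q a - q c = (q a - q b) + (q b - q c) := by abel
    rw [hp, hq, inner_add_left, inner_add_left, H _ _ _ _ h hkl, ih]

lemma auxB9 {n d : ℕ} {G : SimpleGraph (Fin n)} (hconn : G.Connected)
    {p q : Fin n → EuclideanSpace ℝ (Fin d)}
    (H : ∀ i j k l : Fin n, G.Adj i j → G.Adj k l →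
        ⟪p i - p j, p k - p l⟫ = ⟪q i - q j, q k - q l⟫)
    (i j : Fin n) {k l : Fin n} (w : G.Walk k l) :
    ⟪p i - p j, p k - p l⟫ = ⟪q i - q j, q k - q l⟫ := by
  induction w with
  | nil => simp
  | @cons a b c h w ih =>
    have hp : p a - p c = (p a - p b) + (p b - p c) := by abel
    have hq : q a - q c = (q a - q b) + (q b - q c) := by abel
    obtain ⟨w'⟩ := hconn i j
    have := auxA9 H h w'
    rw [hp, hq, inner_add_right, inner_add_right, ih, this]

/-- For a connected graph `G`, the Euclidean distance matrices of `p`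
and `q` coincide iff the Gram matrices of their edge displacement vectors coincide. -/
theorem stmt9 {n d : ℕ} (G : SimpleGraph (Fin n)) (hconn : G.Connected)
    (p q : Fin n → EuclideanSpace ℝ (Fin d)) :
    (∀ i j : Fin n, ‖p i - p j‖ = ‖q i - q j‖) ↔
      (∀ i j k l : Fin n, G.Adj i j → G.Adj k l →
        ⟪p i - p j, p k - p l⟫ = ⟪q i - q j, q k - q l⟫) := by
  constructor
  · intro hnorm i j k l _ _
    rw [polar9, polar9, hnorm, hnorm, hnorm, hnorm]
  · intro H i j
    obtain ⟨w⟩ := hconn i j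
    have h2 : ‖p i - p j‖^2 = ‖q i - q j‖^2 := by
      rw [← real_inner_self_eq_norm_sq, ← real_inner_self_eq_norm_sq]
      exact auxB9 hconn H i j w
    nlinarith [norm_nonneg (p i - p j), norm_nonneg (q i - q j)]
end

section
/- If a framework (G,p) in ℝ^d with n ≥ d+1 vertices is infinitesimally weakly rigid (for some T*), then the points p_1,…,p_n do not lie in a hyperplane of ℝ^d; i.e., the affine span of {p_1,…,p_n} is all of ℝ^d. -/
open RealInnerProductSpace Topology

section Aux
variable {n d : ℕ} (T : Set (Fin n × Fin n × Fin n)) (p : Fin n → EuclideanSpace ℝ (Fin d))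

noncomputable def projD (i : Fin n) :
    (Fin n → EuclideanSpace ℝ (Fin d)) →L[ℝ] EuclideanSpace ℝ (Fin d) :=
  ContinuousLinearMap.proj i

open Classical in
lemma diff_comp (t : Fin n × Fin n × Fin n) :
    HasFDerivAt (fun q => weakRigidityFun T q t)
      (if t ∈ T then
        ((fderivInnerCLM ℝ (p t.1 - p t.2.1, p t.1 - p t.2.2)).comp
          ((projD t.1 - projD t.2.1 : _ →L[ℝ] _).prod (projD t.1 - projD t.2.2 : _ →L[ℝ] _)))
      else 0) p := by
  by_cases ht : t ∈ T
  · rw [if_pos ht]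
    have h1 := ((projD (d := d) t.1).hasFDerivAt (x := p)).sub ((projD t.2.1).hasFDerivAt (x := p))
    have h2 := ((projD (d := d) t.1).hasFDerivAt (x := p)).sub ((projD t.2.2).hasFDerivAt (x := p))
    have := h1.inner ℝ h2
    exact this.congr_of_eventuallyEq (Filter.Eventually.of_forall fun q => by
      simp [weakRigidityFun, if_pos ht, projD])
  · rw [if_neg ht]
    have : (fun q : Fin n → EuclideanSpace ℝ (Fin d) => weakRigidityFun T q t)
        = fun _ => (0:ℝ) := by
      funext q; simp [weakRigidityFun, if_neg ht]
    rw [this]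
    exact hasFDerivAt_const _ _

open Classical in
lemma fderiv_weak_apply (q : Fin n → EuclideanSpace ℝ (Fin d)) (t : Fin n × Fin n × Fin n) :
    fderiv ℝ (weakRigidityFun T) p q t =
      if t ∈ T then
        ⟪p t.1 - p t.2.1, q t.1 - q t.2.2⟫ + ⟪q t.1 - q t.2.1, p t.1 - p t.2.2⟫ else 0 := by
  have hd : ∀ t, DifferentiableAt ℝ (fun q => weakRigidityFun T q t) p :=
    fun t => (diff_comp T p t).differentiableAt
  have : fderiv ℝ (weakRigidityFun T) p = ContinuousLinearMap.pi
      (fun t => fderiv ℝ (fun q => weakRigidityFun T q t) p) := fderiv_pi hd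
  rw [this]
  simp only [ContinuousLinearMap.pi_apply]
  rw [(diff_comp T p t).fderiv]
  by_cases ht : t ∈ T
  · rw [if_pos ht, if_pos ht]
    simp [fderivInnerCLM_apply, projD]
  · rw [if_neg ht, if_neg ht]; rfl

lemma key_alg {E : Type*} [NormedAddCommGroup E] [InnerProductSpace ℝ E] (A B e f : E) :
    ⟪e, ⟪A,f⟫ • B - ⟪B,f⟫ • A⟫ + ⟪(⟪A,e⟫ • B - ⟪B,e⟫ • A : E), f⟫ = 0 := by
  simp only [inner_sub_left, inner_sub_right, real_inner_smul_left, real_inner_smul_right]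
  rw [real_inner_comm e B, real_inner_comm e A]
  ring

end Aux

lemma card_lt_pairs (k : ℕ) :
    2 * Fintype.card {x : Fin k × Fin k // x.1 < x.2} + k = k * k := by
  have e : {x : Fin k × Fin k // x.1 < x.2} ≃ (Σ b : Fin k, Fin b.1) :=
    { toFun := fun x => ⟨x.1.2, ⟨x.1.1.1, x.2⟩⟩
      invFun := fun s => ⟨(⟨s.2.1, lt_trans s.2.2 s.1.2⟩, s.1), s.2.2⟩
      left_inv := fun x => by ext <;> rfl
      right_inv := fun s => by ext <;> rfl }
  have h1 : Fintype.card {x : Fin k × Fin k // x.1 < x.2} = ∑ b : Fin k, (b : ℕ) := by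
    rw [Fintype.card_congr e, Fintype.card_sigma]
    simp
  have h2 : (∑ i ∈ Finset.range k, i) * 2 = k * (k - 1) := Finset.sum_range_id_mul_two k
  rw [h1, Fin.sum_univ_eq_sum_range (fun i => i) k]
  cases k with
  | zero => simp
  | succ k' =>
    have h3 : (k' + 1) * (k' + 1) = (k' + 1) * k' + (k' + 1) := by ring
    have h4 : (k' + 1) * ((k' + 1) - 1) = (k' + 1) * k' := by simp
    omega

set_option maxHeartbeats 2000000 in
/-- If `(G,p)` with `n ≥ d+1` vertices is infinitesimally weakly
rigid, then the points `p 1, …, p n` do not lie in a hyperplane: their affine span is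
all of `ℝ^d`. -/
theorem stmt10 {n d : ℕ} (hn : d + 1 ≤ n) (G : SimpleGraph (Fin n))
    (p : Fin n → EuclideanSpace ℝ (Fin d)) (h : IsInfWeaklyRigid G p) :
    affineSpan ℝ (Set.range p) = ⊤ := by
  classical
  by_contra hspan
  obtain ⟨T, -, hrank⟩ := h
  have hn0 : 0 < n := by omega
  set i0 : Fin n := ⟨0, hn0⟩ with hi0
  have hne : (Set.range p).Nonempty := ⟨p i0, Set.mem_range_self _⟩
  set U : Submodule ℝ (EuclideanSpace ℝ (Fin d)) := vectorSpan ℝ (Set.range p) with hUdef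
  have hU : U ≠ ⊤ := fun hU => hspan
    ((AffineSubspace.affineSpan_eq_top_iff_vectorSpan_eq_top_of_nonempty ℝ (EuclideanSpace ℝ (Fin d)) (EuclideanSpace ℝ (Fin d)) (s := Set.range p) hne).mpr hU)
  set k := Module.finrank ℝ U with hkdef
  set m := Module.finrank ℝ Uᗮ with hmdef
  have hkm : k + m = d := by
    rw [hkdef, hmdef]
    rw [U.finrank_add_finrank_orthogonal]
    simp [finrank_euclideanSpace]
  have hkd : k < d := by
    have := Submodule.finrank_lt (K := ℝ) (s := U) hU
    simpa [finrank_euclideanSpace] using this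
  have hm1 : 1 ≤ m := by omega
  set bU := stdOrthonormalBasis ℝ U with hbU
  set bW := stdOrthonormalBasis ℝ (Uᗮ) with hbW
  -- the coerced families are orthonormal
  have hbUo : Orthonormal ℝ (fun a => (bU a : EuclideanSpace ℝ (Fin d))) := by
    rw [orthonormal_iff_ite]
    intro a b
    rw [← Submodule.coe_inner]
    exact orthonormal_iff_ite.mp bU.orthonormal a b
  have hbWo : Orthonormal ℝ (fun a => (bW a : EuclideanSpace ℝ (Fin d))) := by
    rw [orthonormal_iff_ite]
    intro a b
    rw [← Submodule.coe_inner]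
    exact orthonormal_iff_ite.mp bW.orthonormal a b
  have hpU : ∀ i j : Fin n, p i - p j ∈ U := fun i j => by
    exact vsub_mem_vectorSpan ℝ (Set.mem_range_self i) (Set.mem_range_self j)
  -- the index type
  -- the family of flexes
  set v : ((Fin n × Fin m) ⊕ (Fin k ⊕ {x : Fin k × Fin k // x.1 < x.2})) → (Fin n → EuclideanSpace ℝ (Fin d)) := fun s =>
    match s with
    | .inl (i, a) => Pi.single i (bW a : EuclideanSpace ℝ (Fin d))
    | .inr (.inl c) => fun _ => (bU c : EuclideanSpace ℝ (Fin d))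
    | .inr (.inr pr) => fun i =>
        ⟪(bU pr.1.1 : EuclideanSpace ℝ (Fin d)), p i - p i0⟫ • (bU pr.1.2 : EuclideanSpace ℝ (Fin d))
          - ⟪(bU pr.1.2 : EuclideanSpace ℝ (Fin d)), p i - p i0⟫ • (bU pr.1.1 : EuclideanSpace ℝ (Fin d))
    with hv
  -- each member of the family lies in the kernel of the Jacobian
  have hv1 : ∀ (i : Fin n) (a : Fin m), v (.inl (i,a)) = Pi.single i (bW a : EuclideanSpace ℝ (Fin d)) := fun _ _ => rfl
  have hv2 : ∀ c : Fin k, v (.inr (.inl c)) = fun _ => (bU c : EuclideanSpace ℝ (Fin d)) := fun _ => rfl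
  have hv3 : ∀ pr : {x : Fin k × Fin k // x.1 < x.2}, v (.inr (.inr pr)) = fun i =>
      ⟪(bU pr.1.1 : EuclideanSpace ℝ (Fin d)), p i - p i0⟫ • (bU pr.1.2 : EuclideanSpace ℝ (Fin d))
        - ⟪(bU pr.1.2 : EuclideanSpace ℝ (Fin d)), p i - p i0⟫ • (bU pr.1.1 : EuclideanSpace ℝ (Fin d)) := fun _ => rfl
  have hker : ∀ s, fderiv ℝ (weakRigidityFun T) p (v s) = 0 := by
    intro s
    funext t
    rw [fderiv_weak_apply, Pi.zero_apply]
    by_cases ht : t ∈ T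
    · rw [if_pos ht]
      rcases s with ⟨i, a⟩ | c | pr
      · rw [hv1]
        have hq : ∀ x y : Fin n,
            (Pi.single i ((bW a : EuclideanSpace ℝ (Fin d))) : Fin n → EuclideanSpace ℝ (Fin d)) x
              - (Pi.single i ((bW a : EuclideanSpace ℝ (Fin d))) : Fin n → EuclideanSpace ℝ (Fin d)) y ∈ Uᗮ := by
          intro x y
          refine sub_mem ?_ ?_ <;>
          · rw [Pi.single_apply]
            split
            · exact SetLike.coe_mem _
            · exact zero_mem _
        rw [Submodule.inner_right_of_mem_orthogonal (hpU _ _) (hq _ _),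
          Submodule.inner_left_of_mem_orthogonal (hpU _ _) (hq _ _)]
        simp
      · rw [hv2]
        simp
      · rw [hv3]
        set A := (bU pr.1.1 : EuclideanSpace ℝ (Fin d))
        set B := (bU pr.1.2 : EuclideanSpace ℝ (Fin d))
        have hdd : ∀ x y : Fin n,
            (⟪A, p x - p i0⟫ • B - ⟪B, p x - p i0⟫ • A)
              - (⟪A, p y - p i0⟫ • B - ⟪B, p y - p i0⟫ • A)
            = ⟪A, p x - p y⟫ • B - ⟪B, p x - p y⟫ • A := by
          intro x y
          simp only [inner_sub_right]
          module
        rw [hdd, hdd, key_alg]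
    · rw [if_neg ht]
  -- linear independence of the family
  have hli : LinearIndependent ℝ v := by
    rw [Fintype.linearIndependent_iff]
    intro g hg
    set Ψ := (∑ pr : {x : Fin k × Fin k // x.1 < x.2}, g (.inr (.inr pr)) •
        ((innerₛₗ ℝ ((bU pr.1.1 : EuclideanSpace ℝ (Fin d)))).smulRight
            ((bU pr.1.2 : EuclideanSpace ℝ (Fin d)))
          - (innerₛₗ ℝ ((bU pr.1.2 : EuclideanSpace ℝ (Fin d)))).smulRight
            ((bU pr.1.1 : EuclideanSpace ℝ (Fin d))))
        : EuclideanSpace ℝ (Fin d) →ₗ[ℝ] EuclideanSpace ℝ (Fin d)) with hΨ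
    have hΨapp : ∀ x, Ψ x = ∑ pr : {x : Fin k × Fin k // x.1 < x.2}, g (.inr (.inr pr)) •
        (⟪(bU pr.1.1 : EuclideanSpace ℝ (Fin d)), x⟫ • (bU pr.1.2 : EuclideanSpace ℝ (Fin d))
          - ⟪(bU pr.1.2 : EuclideanSpace ℝ (Fin d)), x⟫ • (bU pr.1.1 : EuclideanSpace ℝ (Fin d))) := by
      intro x
      rw [hΨ, LinearMap.sum_apply]
      simp only [LinearMap.smul_apply, LinearMap.sub_apply, LinearMap.smulRight_apply,
        innerₛₗ_apply_apply]
    set yA : Fin n → EuclideanSpace ℝ (Fin d) := fun i =>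
      ∑ a, g (.inl (i,a)) • (bW a : EuclideanSpace ℝ (Fin d)) with hyA
    set yB : EuclideanSpace ℝ (Fin d) := ∑ c, g (.inr (.inl c)) •
      (bU c : EuclideanSpace ℝ (Fin d)) with hyB
    have hsum : ∀ i, yA i + (yB + Ψ (p i - p i0)) = 0 := by
      intro i
      have h0 : (∑ s, g s • v s) i = 0 := by rw [hg]; rfl
      rw [Finset.sum_apply] at h0
      simp only [Pi.smul_apply] at h0
      rw [Fintype.sum_sum_type, Fintype.sum_sum_type] at h0
      have e1 : ∑ x : Fin n × Fin m, g (.inl x) • v (.inl x) i = yA i := by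
        rw [Fintype.sum_prod_type_right, hyA]
        refine Finset.sum_congr rfl fun a _ => ?_
        have hpt : ∀ i' : Fin n, v (.inl (i', a)) i
            = if i = i' then (bW a : EuclideanSpace ℝ (Fin d)) else 0 := by
          intro i'
          rw [hv1]
          exact Pi.single_apply i' _ i
        simp only [hpt, smul_ite, smul_zero, Finset.sum_ite_eq, Finset.mem_univ, if_true]
      have e2 : ∑ c : Fin k, g (.inr (.inl c)) • v (.inr (.inl c)) i = yB := by
        rw [hyB]
      have e3 : ∑ pr : {x : Fin k × Fin k // x.1 < x.2},
          g (.inr (.inr pr)) • v (.inr (.inr pr)) i = Ψ (p i - p i0) := by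
        rw [hΨapp]
      rw [e1, e2, e3] at h0
      exact h0
    have hyAW : ∀ i, yA i ∈ Uᗮ := fun i =>
      Submodule.sum_mem _ fun a _ => Submodule.smul_mem _ _ (SetLike.coe_mem _)
    have hyBCU : ∀ i, yB + Ψ (p i - p i0) ∈ U := by
      intro i
      refine add_mem (Submodule.sum_mem _ fun c _ => Submodule.smul_mem _ _ (SetLike.coe_mem _)) ?_
      rw [hΨapp]
      exact Submodule.sum_mem _ fun pr _ => Submodule.smul_mem _ _
        (sub_mem (Submodule.smul_mem _ _ (SetLike.coe_mem _))
          (Submodule.smul_mem _ _ (SetLike.coe_mem _)))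
    have hzero : ∀ i, yA i = 0 ∧ yB + Ψ (p i - p i0) = 0 := by
      intro i
      have h2 : yA i ∈ U := by
        have h1 : yA i = -(yB + Ψ (p i - p i0)) := eq_neg_of_add_eq_zero_left (hsum i)
        rw [h1]
        exact neg_mem (hyBCU i)
      have h3 : yA i = 0 := by
        have := Submodule.inner_right_of_mem_orthogonal h2 (hyAW i)
        exact inner_self_eq_zero.mp this
      refine ⟨h3, ?_⟩
      have := hsum i
      rwa [h3, zero_add] at this
    have hgA : ∀ (i : Fin n) (a : Fin m), g (.inl (i, a)) = 0 := by
      intro i a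
      exact Fintype.linearIndependent_iff.mp hbWo.linearIndependent
        (fun a => g (.inl (i, a))) (hzero i).1 a
    have hΨ0 : Ψ (p i0 - p i0) = 0 := by
      rw [sub_self, map_zero]
    have hyB0 : yB = 0 := by
      have := (hzero i0).2
      rwa [hΨ0, add_zero] at this
    have hgB : ∀ c : Fin k, g (.inr (.inl c)) = 0 := by
      intro c
      exact Fintype.linearIndependent_iff.mp hbUo.linearIndependent
        (fun c => g (.inr (.inl c))) hyB0 c
    have hΨC : ∀ i, Ψ (p i - p i0) = 0 := by
      intro i
      have := (hzero i).2
      rwa [hyB0, zero_add] at this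
    have hΨU : U ≤ LinearMap.ker Ψ := by
      have hUspan : U = Submodule.span ℝ (Set.range fun i => p i - p i0) := by
        rw [hUdef]
        have := vectorSpan_range_eq_span_range_vsub_right ℝ p i0
        simpa using this
      rw [hUspan, Submodule.span_le]
      rintro x ⟨i, rfl⟩
      simp only [SetLike.mem_coe, LinearMap.mem_ker]
      exact hΨC i
    have hite : ∀ x y : Fin k, (⟪(bU x : EuclideanSpace ℝ (Fin d)),
        (bU y : EuclideanSpace ℝ (Fin d))⟫ : ℝ) = if x = y then 1 else 0 :=
      orthonormal_iff_ite.mp hbUo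
    have hgC : ∀ pr : {x : Fin k × Fin k // x.1 < x.2}, g (.inr (.inr pr)) = 0 := by
      rintro ⟨⟨a0, b0⟩, hab⟩
      have h1 : Ψ ((bU a0 : EuclideanSpace ℝ (Fin d))) = 0 :=
        LinearMap.mem_ker.mp (hΨU (SetLike.coe_mem (bU a0)))
      have h2 : (⟪(bU b0 : EuclideanSpace ℝ (Fin d)),
          Ψ ((bU a0 : EuclideanSpace ℝ (Fin d)))⟫ : ℝ)
          = g (.inr (.inr ⟨(a0, b0), hab⟩)) := by
        rw [hΨapp, inner_sum]
        have habv : a0 < b0 := hab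
        rw [Finset.sum_eq_single (⟨(a0, b0), hab⟩ : {x : Fin k × Fin k // x.1 < x.2})]
        · simp only [real_inner_smul_right, inner_sub_right, hite]
          norm_num [ne_of_gt habv]
        · rintro ⟨⟨a1, b1⟩, hab1⟩ - hne
          have hab1v : a1 < b1 := hab1
          simp only [real_inner_smul_right, inner_sub_right, hite]
          by_cases e1 : a1 = a0
          · have e2 : b0 ≠ b1 := fun hh => hne (Subtype.ext (Prod.ext e1 hh.symm))
            have e3 : b1 ≠ a0 := by
              intro hh
              have h5 := hab1v
              rw [hh, ← e1] at h5
              exact absurd h5 (lt_irrefl _)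
            rw [if_neg e2, if_neg e3]
            ring
          · rw [if_neg e1]
            by_cases e3 : b1 = a0
            · have e4 : b0 ≠ a1 := by
                intro hh
                have h5 := habv
                rw [hh, ← e3] at h5
                exact absurd h5 (lt_asymm hab1v)
              rw [if_neg e4]
              ring
            · rw [if_neg e3]
              ring
        · intro hmem
          exact absurd (Finset.mem_univ _) hmem
      rw [h1, inner_zero_right] at h2
      exact h2.symm
    intro s
    rcases s with ⟨i, a⟩ | c | pr
    · exact hgA i a
    · exact hgB c
    · exact hgC pr
  -- cardinality bookkeeping
  have hcard : Fintype.card ((Fin n × Fin m) ⊕ (Fin k ⊕ {x : Fin k × Fin k // x.1 < x.2}))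
      = n * m + (k + Fintype.card {x : Fin k × Fin k // x.1 < x.2}) := by
    simp [Fintype.card_sum, Fintype.card_prod]
  have hcardP : 2 * Fintype.card {x : Fin k × Fin k // x.1 < x.2} + k = k * k :=
    card_lt_pairs k
  -- rank-nullity
  set L := (fderiv ℝ (weakRigidityFun T) p).toLinearMap with hL
  have hrn : Module.finrank ℝ (LinearMap.range L) + Module.finrank ℝ (LinearMap.ker L)
      = n * d := by
    rw [LinearMap.finrank_range_add_finrank_ker L]
    rw [Module.finrank_pi_fintype]
    simp [finrank_euclideanSpace]
  have hcard_le : Fintype.card ((Fin n × Fin m) ⊕ (Fin k ⊕ {x : Fin k × Fin k // x.1 < x.2}))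
      ≤ Module.finrank ℝ (LinearMap.ker L) := by
    have hv' : ∀ s, v s ∈ LinearMap.ker L := by
      intro s
      rw [LinearMap.mem_ker]
      exact hker s
    let v' : _ → LinearMap.ker L := fun s => ⟨v s, hv' s⟩
    have : LinearIndependent ℝ v' := by
      apply LinearIndependent.of_comp (LinearMap.ker L).subtype
      exact hli
    exact this.fintype_card_le_finrank
  -- final arithmetic contradiction
  have hle : n * m + (k + Fintype.card {x : Fin k × Fin k // x.1 < x.2}) ≤ d * (d + 1) / 2 := by
    rw [← hcard]
    have hjac : jacRank (weakRigidityFun T) p = Module.finrank ℝ (LinearMap.range L) := rfl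
    omega
  have h2 : d * (d + 1) / 2 * 2 = d * (d + 1) := Nat.div_mul_cancel (Nat.even_mul_succ_self d).two_dvd
  set c := Fintype.card {x : Fin k × Fin k // x.1 < x.2}
  have hdd : d * (d + 1) = k * k + 2 * (k * m) + m * m + k + m := by rw [← hkm]; ring
  have hA : k * m + m * m + m ≤ n * m := by
    calc k * m + m * m + m = (d + 1) * m := by rw [← hkm]; ring
    _ ≤ n * m := Nat.mul_le_mul_right m hn
  have hB : m ≤ m * m := Nat.le_mul_of_pos_left m (by omega)
  omega
end

section
/- If a framework (G,p) in ℝ^d with n ≥ d+1 vertices is infinitesimally weakly rigid for the triple set T*, then (G,p) is weakly rigid for T*: there exists a neighborhood U of p in ℝ^{nd} such that every q ∈ U that is weakly equivalent to p for T* is weakly congruent to p. -/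
open RealInnerProductSpace Topology

/-- Weak equivalence for the triple set `T`. -/
def WeaklyEquivalent {n d : ℕ} (T : Set (Fin n × Fin n × Fin n))
    (p q : Fin n → EuclideanSpace ℝ (Fin d)) : Prop :=
  ∀ t ∈ T, ⟪p t.1 - p t.2.1, p t.1 - p t.2.2⟫ = ⟪q t.1 - q t.2.1, q t.1 - q t.2.2⟫

/-- Weak congruence: all pairwise inner products of displacements agree. -/
def WeaklyCongruent {n d : ℕ} (p q : Fin n → EuclideanSpace ℝ (Fin d)) : Prop :=
  ∀ i j k : Fin n, ⟪p i - p j, p i - p k⟫ = ⟪q i - q j, q i - q k⟫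


namespace Stmt11Aux

open Matrix

variable {n d : ℕ}

abbrev Cfg (n d : ℕ) := Fin n → EuclideanSpace ℝ (Fin d)
abbrev Tri (n : ℕ) := Fin n × Fin n × Fin n
abbrev Yy (n : ℕ) := Tri n → ℝ

/-- the full congruence map -/
noncomputable def gmap (q : Cfg n d) : Yy n := fun t => ⟪q t.1 - q t.2.1, q t.1 - q t.2.2⟫

/-- its derivative at `q`, as a linear map -/
noncomputable def Gl (q : Cfg n d) : Cfg n d →ₗ[ℝ] Yy n where
  toFun u := fun t => ⟪u t.1 - u t.2.1, q t.1 - q t.2.2⟫ + ⟪q t.1 - q t.2.1, u t.1 - u t.2.2⟫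
  map_add' u v := by
    funext t
    simp only [Pi.add_apply, add_sub_add_comm, inner_add_left, inner_add_right]
    ring
  map_smul' c u := by
    funext t
    simp only [Pi.smul_apply, ← smul_sub, inner_smul_left, inner_smul_right,
      RingHom.id_apply, smul_eq_mul, conj_trivial]
    ring

lemma Gl_symm (q u : Cfg n d) : Gl q u = Gl u q := by
  funext t; simp only [Gl, LinearMap.coe_mk, AddHom.coe_mk]; ring

/-- the derivative as a continuous linear map -/
noncomputable def G (q : Cfg n d) : Cfg n d →L[ℝ] Yy n :=
  (Gl q).toContinuousLinearMap

@[simp] lemma G_apply (q u : Cfg n d) : G q u = Gl q u := rfl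

lemma hasStrictFDerivAt_gmap (q : Cfg n d) :
    HasStrictFDerivAt (gmap (n := n) (d := d)) (G q) q := by
  apply hasStrictFDerivAt_pi''
  intro t
  have h1 : HasStrictFDerivAt (fun x : Cfg n d => x t.1 - x t.2.1)
      ((ContinuousLinearMap.proj t.1 : Cfg n d →L[ℝ] EuclideanSpace ℝ (Fin d))
        - ContinuousLinearMap.proj t.2.1) q :=
    (hasStrictFDerivAt_apply t.1 q).sub (hasStrictFDerivAt_apply t.2.1 q)
  have h2 : HasStrictFDerivAt (fun x : Cfg n d => x t.1 - x t.2.2)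
      ((ContinuousLinearMap.proj t.1 : Cfg n d →L[ℝ] EuclideanSpace ℝ (Fin d))
        - ContinuousLinearMap.proj t.2.2) q :=
    (hasStrictFDerivAt_apply t.1 q).sub (hasStrictFDerivAt_apply t.2.2 q)
  have h := h1.inner ℝ h2
  refine h.congr_fderiv ?_
  ext u
  simp [fderivInnerCLM_apply, gmap, Gl, G, real_inner_comm]
  ring

lemma hasFDerivAt_gmap (q : Cfg n d) :
    HasFDerivAt (gmap (n := n) (d := d)) (G q) q :=
  (hasStrictFDerivAt_gmap q).hasFDerivAt

lemma continuous_gmap : Continuous (gmap (n := n) (d := d)) :=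
  continuous_iff_continuousAt.2 fun q => (hasFDerivAt_gmap q).continuousAt


/-! ## The uniform rank bound -/

noncomputable def mIdx (hn : d + 1 ≤ n) : Fin (d + 1) → Fin n := Fin.castLE hn

lemma card_pairs : Fintype.card {x : Fin d × Fin d // x.1 ≤ x.2} = d * (d + 1) / 2 := by
  have h := Fintype.card_congr (Sym2.sortEquiv (α := Fin d)).symm
  rw [Sym2.card, Fintype.card_fin, Nat.choose_two_right] at h
  rw [h, Nat.add_sub_cancel, Nat.mul_comm]

lemma skew_inner (A : Matrix (Fin d) (Fin d) ℝ) (x y : EuclideanSpace ℝ (Fin d)) :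
    ⟪Matrix.toEuclideanLin (A - Aᵀ) x, y⟫ + ⟪x, Matrix.toEuclideanLin (A - Aᵀ) y⟫ = 0 := by
  have h : Matrix.toEuclideanLin ((A - Aᵀ)ᴴ)
      = LinearMap.adjoint (Matrix.toEuclideanLin (A - Aᵀ)) :=
    Matrix.toEuclideanLin_conjTranspose_eq_adjoint _
  have h2 : ((A - Aᵀ)ᴴ) = Aᵀ - A := by
    rw [Matrix.conjTranspose_eq_transpose_of_trivial, Matrix.transpose_sub,
      Matrix.transpose_transpose]
  have h3 : ⟪x, Matrix.toEuclideanLin (A - Aᵀ) y⟫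
      = ⟪Matrix.toEuclideanLin (Aᵀ - A) x, y⟫ := by
    rw [← h2, h, LinearMap.adjoint_inner_left]
  rw [h3, show Aᵀ - A = -(A - Aᵀ) by abel, map_neg, LinearMap.neg_apply, inner_neg_left]
  ring

noncomputable def Theta (q : Cfg n d) :
    (Matrix (Fin d) (Fin d) ℝ × EuclideanSpace ℝ (Fin d)) →ₗ[ℝ] Cfg n d where
  toFun Ab := fun i => Matrix.toEuclideanLin (Ab.1 - (Ab.1)ᵀ) (q i) + Ab.2
  map_add' Ab Cb := by
    funext i
    show Matrix.toEuclideanLin ((Ab.1 + Cb.1) - (Ab.1 + Cb.1)ᵀ) (q i) + (Ab.2 + Cb.2) = _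
    rw [Matrix.transpose_add,
      show (Ab.1 + Cb.1) - ((Ab.1)ᵀ + (Cb.1)ᵀ) = (Ab.1 - (Ab.1)ᵀ) + (Cb.1 - (Cb.1)ᵀ) by abel,
      map_add, LinearMap.add_apply]
    show _ = (Matrix.toEuclideanLin (Ab.1 - (Ab.1)ᵀ) (q i) + Ab.2)
        + (Matrix.toEuclideanLin (Cb.1 - (Cb.1)ᵀ) (q i) + Cb.2)
    abel
  map_smul' c Ab := by
    funext i
    show Matrix.toEuclideanLin ((c • Ab.1) - (c • Ab.1)ᵀ) (q i) + c • Ab.2 = _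
    rw [Matrix.transpose_smul, show (c • Ab.1) - (c • (Ab.1)ᵀ) = c • (Ab.1 - (Ab.1)ᵀ) by
      rw [smul_sub], _root_.map_smul, LinearMap.smul_apply]
    show _ = c • (Matrix.toEuclideanLin (Ab.1 - (Ab.1)ᵀ) (q i) + Ab.2)
    rw [smul_add]

lemma rank_bound_of_indep (hd : 0 < d) (hn : d + 1 ≤ n) (q : Cfg n d)
    (hq : LinearIndependent ℝ (fun j : Fin d => q (mIdx hn j.succ) - q (mIdx hn 0))) :
    Module.finrank ℝ (LinearMap.range (Gl q)) + d * (d + 1) / 2 ≤ n * d := by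
  have hne : Nonempty (Fin d) := ⟨⟨0, hd⟩⟩
  have hcard : Fintype.card (Fin d) = Module.finrank ℝ (EuclideanSpace ℝ (Fin d)) := by
    simp
  let B := basisOfLinearIndependentOfCardEqFinrank hq hcard
  have hB : ⇑B = fun j : Fin d => q (mIdx hn j.succ) - q (mIdx hn 0) :=
    coe_basisOfLinearIndependentOfCardEqFinrank _ _
  -- range Θ ≤ ker (Gl q)
  have hrange : LinearMap.range (Theta q) ≤ LinearMap.ker (Gl q) := by
    rintro u ⟨Ab, rfl⟩
    rw [LinearMap.mem_ker]
    funext t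
    have e1 : Theta q Ab t.1 - Theta q Ab t.2.1
        = Matrix.toEuclideanLin (Ab.1 - (Ab.1)ᵀ) (q t.1 - q t.2.1) := by
      show (Matrix.toEuclideanLin _ (q t.1) + Ab.2)
          - (Matrix.toEuclideanLin _ (q t.2.1) + Ab.2) = _
      rw [map_sub (Matrix.toEuclideanLin (Ab.1 - (Ab.1)ᵀ))]; abel
    have e2 : Theta q Ab t.1 - Theta q Ab t.2.2
        = Matrix.toEuclideanLin (Ab.1 - (Ab.1)ᵀ) (q t.1 - q t.2.2) := by
      show (Matrix.toEuclideanLin _ (q t.1) + Ab.2)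
          - (Matrix.toEuclideanLin _ (q t.2.2) + Ab.2) = _
      rw [map_sub (Matrix.toEuclideanLin (Ab.1 - (Ab.1)ᵀ))]; abel
    show ⟪Theta q Ab t.1 - Theta q Ab t.2.1, q t.1 - q t.2.2⟫
        + ⟪q t.1 - q t.2.1, Theta q Ab t.1 - Theta q Ab t.2.2⟫ = (0 : ℝ)
    rw [e1, e2]
    exact skew_inner _ _ _
  -- ker Θ injects into upper-triangular data
  let pairs := {x : Fin d × Fin d // x.1 ≤ x.2}
  let ρ : LinearMap.ker (Theta q) →ₗ[ℝ] (pairs → ℝ) :=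
    { toFun := fun Ab => fun s => Ab.val.1 s.val.1 s.val.2
      map_add' := fun a b => by funext s; rfl
      map_smul' := fun c a => by funext s; rfl }
  have hinj : Function.Injective ρ := by
    rw [injective_iff_map_eq_zero]
    rintro ⟨⟨A, b⟩, hmem⟩ h0
    rw [LinearMap.mem_ker] at hmem
    have happ : ∀ i, Matrix.toEuclideanLin (A - Aᵀ) (q i) + b = 0 := fun i => congrFun hmem i
    have hv : ∀ j : Fin d, Matrix.toEuclideanLin (A - Aᵀ) (B j) = 0 := by
      intro j
      have h1 := happ (mIdx hn j.succ)
      have h2 := happ (mIdx hn 0)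
      have := sub_eq_zero_of_eq (h1.trans h2.symm)
      rw [add_sub_add_right_eq_sub, ← map_sub] at this
      rw [hB]
      exact this
    have hS : Matrix.toEuclideanLin (A - Aᵀ) = 0 := by
      apply B.ext
      intro j
      rw [hv j, LinearMap.zero_apply]
    have hA : A - Aᵀ = 0 := by
      apply Matrix.toEuclideanLin.injective
      rw [hS, map_zero]
    have hb : b = 0 := by
      have := happ (mIdx hn 0)
      rw [hS] at this
      simpa using this
    have hAsymm : A = Aᵀ := sub_eq_zero.mp hA
    have hA0 : A = 0 := by
      ext a c
      rcases le_total a c with hac | hca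
      · exact congrFun h0 ⟨(a, c), hac⟩
      · have h1 : A c a = 0 := congrFun h0 ⟨(c, a), hca⟩
        have h2 : A a c = A c a := by
          conv_lhs => rw [hAsymm]
          exact Matrix.transpose_apply ..
        rw [h2, h1, Matrix.zero_apply]
    apply Subtype.ext
    show (A, b) = 0
    rw [hA0, hb]
    rfl
  have hkerle : Module.finrank ℝ (LinearMap.ker (Theta q)) ≤ d * (d + 1) / 2 := by
    have := LinearMap.finrank_le_finrank_of_injective hinj
    rwa [Module.finrank_fintype_fun_eq_card, card_pairs] at this
  have hTheta := LinearMap.finrank_range_add_finrank_ker (Theta q)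
  have hdom : Module.finrank ℝ (Matrix (Fin d) (Fin d) ℝ × EuclideanSpace ℝ (Fin d))
      = d * d + d := by
    rw [Module.finrank_prod, Module.finrank_matrix]
    simp
  rw [hdom] at hTheta
  have hmono : Module.finrank ℝ (LinearMap.range (Theta q))
      ≤ Module.finrank ℝ (LinearMap.ker (Gl q)) := Submodule.finrank_mono hrange
  have hGl := LinearMap.finrank_range_add_finrank_ker (Gl q)
  have hCfg : Module.finrank ℝ (Cfg n d) = n * d := by
    rw [Module.finrank_pi_fintype]
    simp [Finset.sum_const]
  rw [hCfg] at hGl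
  obtain ⟨k, hk⟩ := Nat.even_mul_succ_self d
  have hc : d * (d + 1) / 2 = k := by rw [hk]; omega
  have hdd : d * d + d = k + k := by rw [← hk]; ring
  rw [hdd] at hTheta
  rw [hc] at hkerle ⊢
  generalize hnd : n * d = N at hGl ⊢
  omega


/-! ## Density of spanning configurations -/

lemma exists_indep_near (hd : 0 < d) (hn : d + 1 ≤ n) (q : Cfg n d) {ε : ℝ} (hε : 0 < ε) :
    ∃ q' : Cfg n d, dist q' q < ε ∧
      LinearIndependent ℝ (fun j : Fin d => q' (mIdx hn j.succ) - q' (mIdx hn 0)) := by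
  classical
  let wv : Cfg n d := fun i =>
    ∑ j : Fin d, if (i : ℕ) = (j : ℕ) + 1 then EuclideanSpace.single j (1 : ℝ) else 0
  have hw0 : wv (mIdx hn 0) = 0 := by
    apply Finset.sum_eq_zero
    intro j _
    rw [if_neg]
    simp [mIdx]
  have hwj : ∀ j : Fin d, wv (mIdx hn j.succ) = EuclideanSpace.single j 1 := by
    intro j
    show (∑ j' : Fin d, if ((mIdx hn j.succ : Fin n) : ℕ) = (j' : ℕ) + 1
        then EuclideanSpace.single j' (1 : ℝ) else 0) = EuclideanSpace.single j 1
    rw [Finset.sum_eq_single_of_mem j (Finset.mem_univ j)]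
    · rw [if_pos (by simp [mIdx])]
    · intro b _ hb
      rw [if_neg]
      simp only [mIdx, Fin.coe_castLE, Fin.val_succ]
      intro hcontra
      exact hb (Fin.ext (by omega))
  let A : Matrix (Fin d) (Fin d) ℝ := fun x j => (q (mIdx hn j.succ) - q (mIdx hn 0)) x
  have hbadfin : Set.Finite {t : ℝ | Module.End.HasEigenvalue (Matrix.mulVecLin A) (-t)} := by
    have h1 : {t : ℝ | Module.End.HasEigenvalue (Matrix.mulVecLin A) (-t)}
        = Neg.neg ⁻¹' {μ : ℝ | Module.End.HasEigenvalue (Matrix.mulVecLin A) μ} := rfl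
    rw [h1]
    exact (Module.End.finite_hasEigenvalue (Matrix.mulVecLin A)).preimage neg_injective.injOn
  have hδ : (0 : ℝ) < ε / (‖wv‖ + 1) := by positivity
  obtain ⟨t, ⟨ht1, ht2⟩, htbad⟩ :=
    ((Set.Ioo_infinite hδ).diff hbadfin).nonempty
  refine ⟨q + t • wv, ?_, ?_⟩
  · rw [dist_eq_norm, add_sub_cancel_left, norm_smul, Real.norm_eq_abs, abs_of_pos ht1]
    have hpos : (0 : ℝ) < ‖wv‖ + 1 := by positivity
    have h3 := (lt_div_iff₀ hpos).mp ht2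
    nlinarith [norm_nonneg wv]
  · have hv' : ∀ j : Fin d, (q + t • wv) (mIdx hn j.succ) - (q + t • wv) (mIdx hn 0)
        = (q (mIdx hn j.succ) - q (mIdx hn 0)) + t • EuclideanSpace.single j 1 := by
      intro j
      simp only [Pi.add_apply, Pi.smul_apply, hwj, hw0, smul_zero]
      abel
    rw [Fintype.linearIndependent_iff]
    intro g hg
    set M : Matrix (Fin d) (Fin d) ℝ := A + t • 1 with hMdef
    have hM : IsUnit M := by
      by_contra hNU
      have hninj : ¬ Function.Injective M.mulVec :=
        fun hinj => hNU (Matrix.mulVec_injective_iff_isUnit.mp hinj)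
      rw [Function.not_injective_iff] at hninj
      obtain ⟨x, y, hxy, hne⟩ := hninj
      have hx0 : M.mulVec (x - y) = 0 := by
        rw [Matrix.mulVec_sub, hxy, sub_self]
      have hker : A.mulVec (x - y) + t • (x - y) = 0 := by
        rw [hMdef, Matrix.add_mulVec, Matrix.smul_mulVec, Matrix.one_mulVec] at hx0
        exact hx0
      have heig : Matrix.mulVecLin A (x - y) = (-t) • (x - y) := by
        rw [Matrix.mulVecLin_apply]
        rw [eq_neg_of_add_eq_zero_left hker, neg_smul]
      apply htbad
      exact Module.End.hasEigenvalue_of_hasEigenvector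
        ⟨Module.End.mem_eigenspace_iff.mpr heig, sub_ne_zero_of_ne hne⟩
    have hMinj : Function.Injective M.mulVec := Matrix.mulVec_injective_iff_isUnit.mpr hM
    have hcoord : ∀ j x, ((q + t • wv) (mIdx hn j.succ) - (q + t • wv) (mIdx hn 0)) x
        = M x j := by
      intro j x
      rw [hv' j]
      show (q (mIdx hn j.succ) - q (mIdx hn 0)) x + t * (EuclideanSpace.single j (1:ℝ)) x = _
      rw [EuclideanSpace.single_apply, hMdef]
      have hone : (A + t • 1) x j = A x j + t * (if x = j then 1 else 0) := by
        simp [Matrix.add_apply, Matrix.smul_apply, Matrix.one_apply, smul_eq_mul]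
      rw [hone]
    have hMg : M.mulVec g = 0 := by
      funext x
      have h0 : (WithLp.linearEquiv 2 ℝ (Fin d → ℝ))
          (∑ j : Fin d, g j • ((q + t • wv) (mIdx hn j.succ) - (q + t • wv) (mIdx hn 0)))
          = 0 := by
        rw [hg]; simp
      rw [map_sum] at h0
      have h1 := congrFun h0 x
      simp only [Finset.sum_apply] at h1
      have h2 : ∀ j : Fin d, ((WithLp.linearEquiv 2 ℝ (Fin d → ℝ))
          (g j • ((q + t • wv) (mIdx hn j.succ) - (q + t • wv) (mIdx hn 0)))) x
          = g j * M x j := by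
        intro j
        rw [← hcoord j x]
        rfl
      rw [Finset.sum_congr rfl (fun j _ => h2 j)] at h1
      show (Matrix.mulVec M g) x = 0
      have hmv : (Matrix.mulVec M g) x = ∑ j, M x j * g j := by
        simp [Matrix.mulVec, dotProduct]
      rw [hmv,
        show ∑ j, M x j * g j = ∑ j, g j * M x j from Finset.sum_congr rfl fun j _ => mul_comm _ _]
      exact h1
    intro j
    have := hMinj (a₁ := g) (a₂ := 0) (by rw [hMg, Matrix.mulVec_zero])
    rw [this]
    rfl

/-! ## The rank bound at every configuration -/

set_option maxHeartbeats 1000000 in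
lemma rank_bound (hn : d + 1 ≤ n) (q : Cfg n d) :
    Module.finrank ℝ (LinearMap.range (Gl q)) + d * (d + 1) / 2 ≤ n * d := by
  rcases Nat.eq_zero_or_pos d with hd | hd
  · subst hd
    have h1 := LinearMap.finrank_range_le (Gl q)
    have hCfg : Module.finrank ℝ (Cfg n 0) = 0 := by
      rw [Module.finrank_pi_fintype]
      simp
    omega
  · let B := Module.finBasis ℝ ↥(LinearMap.range (Gl q))
    have hex : ∀ i, ∃ v, Gl q v = (B i : Yy n) :=
      fun i => LinearMap.mem_range.1 (SetLike.coe_mem (B i))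
    choose u hu using hex
    have hindep₀ : LinearIndependent ℝ (fun i => Gl q (u i)) := by
      have he : (fun i => Gl q (u i)) = fun i => ((B i : Yy n)) := by
        funext i; rw [hu i]
      rw [he]
      exact B.linearIndependent.map' (LinearMap.range (Gl q)).subtype (Submodule.ker_subtype _)
    let F : Cfg n d → (Fin (Module.finrank ℝ ↥(LinearMap.range (Gl q))) → Yy n) :=
      fun x i => Gl (u i) x
    have hFc : Continuous F := continuous_pi fun i => (Gl (u i)).continuous_of_finiteDimensional
    have hFq : LinearIndependent ℝ (F q) := by
      have he : F q = fun i => Gl q (u i) := by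
        funext i; exact Gl_symm (u i) q
      rw [he]; exact hindep₀
    have hopen : IsOpen {x : Cfg n d | LinearIndependent ℝ (F x)} :=
      isOpen_setOf_linearIndependent.preimage hFc
    obtain ⟨δ, hδpos, hball⟩ := Metric.isOpen_iff.mp hopen q hFq
    obtain ⟨q', hq'dist, hq'indep⟩ := exists_indep_near hd hn q hδpos
    have hq'mem : LinearIndependent ℝ (F q') := hball (Metric.mem_ball.mpr hq'dist)
    have hind' : LinearIndependent ℝ (fun i => Gl q' (u i)) := by
      have he : (fun i => Gl q' (u i)) = F q' := by
        funext i; exact Gl_symm q' (u i)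
      rw [he]; exact hq'mem
    have hle : Module.finrank ℝ (LinearMap.range (Gl q))
        ≤ Module.finrank ℝ (LinearMap.range (Gl q')) := by
      have hspan : Module.finrank ℝ (Submodule.span ℝ (Set.range fun i => Gl q' (u i)))
          = Module.finrank ℝ (LinearMap.range (Gl q)) := by
        rw [finrank_span_eq_card hind', Fintype.card_fin]
      have hsub : Submodule.span ℝ (Set.range fun i => Gl q' (u i))
          ≤ LinearMap.range (Gl q') := by
        rw [Submodule.span_le]
        rintro y ⟨i, rfl⟩
        exact ⟨u i, rfl⟩
      rw [← hspan]
      exact Submodule.finrank_mono hsub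
    exact le_trans (Nat.add_le_add_right hle _) (rank_bound_of_indep hd hn q' hq'indep)


/-! ## Projection onto the triple set and misc helpers -/

open Classical in
noncomputable def piT (T : Set (Tri n)) : Yy n →ₗ[ℝ] Yy n where
  toFun y := fun t => if t ∈ T then y t else 0
  map_add' y z := by
    funext t; by_cases hx : t ∈ T <;> simp [hx]
  map_smul' c y := by
    funext t; by_cases hx : t ∈ T <;> simp [hx]

lemma weakRigidityFun_eq (T : Set (Tri n)) (q : Cfg n d) :
    weakRigidityFun T q = piT T (gmap q) := by
  funext t
  simp only [weakRigidityFun, piT, gmap, LinearMap.coe_mk, AddHom.coe_mk]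

lemma injective_of_indep_basis {V W : Type*} [AddCommGroup V] [Module ℝ V]
    [AddCommGroup W] [Module ℝ W] {ι : Type*} [Fintype ι] (b : Module.Basis ι ℝ V)
    (f : V →ₗ[ℝ] W) (h : LinearIndependent ℝ (fun i => f (b i))) :
    Function.Injective f := by
  rw [← LinearMap.ker_eq_bot, Submodule.eq_bot_iff]
  intro x hx
  have hfx : f x = 0 := LinearMap.mem_ker.mp hx
  have hsum : ∑ i, b.repr x i • f (b i) = 0 := by
    have : ∑ i, b.repr x i • f (b i) = f (∑ i, b.repr x i • b i) := by
      rw [map_sum]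
      exact Finset.sum_congr rfl fun i _ => (map_smul f _ _).symm
    rw [this, b.sum_repr, hfx]
  have hz := Fintype.linearIndependent_iff.mp h _ hsum
  rw [← b.sum_repr x]
  exact Finset.sum_eq_zero fun i _ => by rw [hz i, zero_smul]

end Stmt11Aux

open Stmt11Aux in
set_option maxHeartbeats 2000000 in
set_option synthInstance.maxHeartbeats 1000000 in
/-- If `(G,p)` with `n ≥ d+1` vertices is infinitesimally weakly
rigid for the triple set `T`, then it is weakly rigid for `T`: on some neighborhood of
`p`, weak equivalence to `p` implies weak congruence to `p`. -/
theorem stmt11 {n d : ℕ} (hn : d + 1 ≤ n) (G : SimpleGraph (Fin n))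
    (T : Set (Fin n × Fin n × Fin n)) (hT : ValidTriples G T)
    (p : Fin n → EuclideanSpace ℝ (Fin d))
    (h : jacRank (weakRigidityFun T) p + d * (d + 1) / 2 = n * d) :
    ∃ U ∈ 𝓝 p, ∀ q ∈ U, WeaklyEquivalent T p q → WeaklyCongruent p q := by
  classical
  -- derivative of the weak rigidity map at p
  let Rp : Cfg n d →L[ℝ] Yy n := (piT T).toContinuousLinearMap.comp (Stmt11Aux.G p)
  have hRp : HasFDerivAt (weakRigidityFun T) Rp p := by
    have h1 : weakRigidityFun T = fun q : Cfg n d => (piT T) (gmap q) :=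
      funext fun q => weakRigidityFun_eq T q
    rw [h1]
    exact ((piT T).toContinuousLinearMap.hasFDerivAt).comp p (hasFDerivAt_gmap p)
  have hfd : fderiv ℝ (weakRigidityFun T) p = Rp := hRp.fderiv
  unfold jacRank at h
  rw [hfd] at h
  -- the target space F₀ and projection
  set F₀ : Submodule ℝ (Yy n) := LinearMap.range (Rp.toLinearMap) with hF₀def
  obtain ⟨F₀c, hF₀c⟩ := Submodule.exists_isCompl F₀
  let prj : Yy n →ₗ[ℝ] F₀ := F₀.projectionOnto F₀c hF₀c
  let prjC : Yy n →L[ℝ] F₀ := prj.toContinuousLinearMap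
  have hprj_left : ∀ y : F₀, prj (y : Yy n) = y :=
    fun y => Submodule.projectionOnto_apply_left hF₀c y
  let L : Yy n →L[ℝ] F₀ := prjC.comp (piT T).toContinuousLinearMap
  let f : Cfg n d → F₀ := fun x => L (gmap x)
  let f' : Cfg n d → (Cfg n d →L[ℝ] F₀) := fun x => L.comp (Stmt11Aux.G x)
  have hfder : ∀ x, HasFDerivAt f (f' x) x :=
    fun x => (L.hasFDerivAt).comp x (hasFDerivAt_gmap x)
  -- surjectivity of f' p
  have hsurjp : Function.Surjective (f' p) := by
    intro y
    obtain ⟨u, hu⟩ := LinearMap.mem_range.mp (y.2 : (y : Yy n) ∈ F₀)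
    refine ⟨u, ?_⟩
    show prj (piT T (Stmt11Aux.G p u)) = y
    have : piT T (Stmt11Aux.G p u) = Rp.toLinearMap u := rfl
    rw [this, hu]
    exact hprj_left y
  -- kernels agree: ker (f' p) = ker Rp; moreover for every x,
  -- ker (Gl x) ≤ ker (f' x)
  have hker_sub : ∀ x : Cfg n d, LinearMap.ker (Gl x) ≤ LinearMap.ker ((f' x).toLinearMap) := by
    intro x u hu
    rw [LinearMap.mem_ker] at hu ⊢
    show L (Stmt11Aux.G x u) = 0
    have : Stmt11Aux.G x u = Gl x u := rfl
    rw [this, hu, map_zero]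
  -- dimension bookkeeping
  have hCfg_rank : Module.finrank ℝ (Cfg n d) = n * d := by
    rw [Module.finrank_pi_fintype]
    simp [Finset.sum_const]
  have hprod_rank : Module.finrank ℝ F₀ + d * (d + 1) / 2 = n * d := h
  have hfp_rn := LinearMap.finrank_range_add_finrank_ker ((f' p).toLinearMap)
  rw [hCfg_rank] at hfp_rn
  have hfp_range : LinearMap.range ((f' p).toLinearMap) = ⊤ :=
    LinearMap.range_eq_top.mpr hsurjp
  rw [hfp_range, finrank_top] at hfp_rn
  -- so  finrank F₀ + finrank K = n*d  with K the kernel of f' p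
  set K : Submodule ℝ (Cfg n d) := LinearMap.ker ((f' p).toLinearMap) with hKdef
  have hK_rank : Module.finrank ℝ K = d * (d + 1) / 2 := by
    have := hfp_rn.trans hprod_rank.symm
    exact Nat.add_left_cancel this
  -- projection onto K
  obtain ⟨Kc, hKc⟩ := Submodule.exists_isCompl K
  let projK : Cfg n d →ₗ[ℝ] K := K.projectionOnto Kc hKc
  let projKC : Cfg n d →L[ℝ] K := projK.toContinuousLinearMap
  have hprojK_left : ∀ u : K, projK (u : Cfg n d) = u :=
    fun u => Submodule.projectionOnto_apply_left hKc u
  -- the map w and its derivative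
  let w : Cfg n d → F₀ × K := fun x => (f x, projKC x)
  let w' : Cfg n d → (Cfg n d →L[ℝ] F₀ × K) := fun x => (f' x).prod projKC
  have hw : ∀ x, HasFDerivAt w (w' x) x := fun x => (hfder x).prodMk projKC.hasFDerivAt
  have hwstrict : HasStrictFDerivAt w (w' p) p :=
    ((L.hasStrictFDerivAt).comp p (hasStrictFDerivAt_gmap p)).prodMk projKC.hasStrictFDerivAt
  -- injectivity of w' p
  have hinjp : Function.Injective ((w' p).toLinearMap) := by
    rw [← LinearMap.ker_eq_bot, Submodule.eq_bot_iff]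
    intro u hu
    rw [LinearMap.mem_ker] at hu
    have h1 : f' p u = 0 := congrArg Prod.fst hu
    have h2 : projK u = 0 := congrArg Prod.snd hu
    have humem : u ∈ K := LinearMap.mem_ker.mpr h1
    have := hprojK_left ⟨u, humem⟩
    rw [h2] at this
    exact congrArg Subtype.val this.symm
  -- finrank equality for building equivalences
  have hdim : Module.finrank ℝ (Cfg n d) = Module.finrank ℝ (F₀ × K) := by
    rw [hCfg_rank, Module.finrank_prod, hK_rank]
    exact hprod_rank.symm
  -- the equivalence associated to any x where w' x is injective
  let eqv : ∀ x : Cfg n d, Function.Injective ((w' x).toLinearMap) → (Cfg n d ≃L[ℝ] F₀ × K) :=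
    fun x hinj =>
      (LinearEquiv.ofBijective ((w' x).toLinearMap)
        ⟨hinj, (LinearMap.injective_iff_surjective_of_finrank_eq_finrank hdim).mp hinj⟩
        ).toContinuousLinearEquiv
  have heqv_coe : ∀ x hinj, ((eqv x hinj : Cfg n d ≃L[ℝ] F₀ × K) : Cfg n d →L[ℝ] F₀ × K)
      = w' x := fun x hinj => ContinuousLinearMap.ext fun u => rfl
  -- open set where w' x is injective
  let bC := Module.finBasis ℝ (Cfg n d)
  let Fw : Cfg n d → (Fin (Module.finrank ℝ (Cfg n d)) → F₀ × K) := fun x i => w' x (bC i)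
  have hFwc : Continuous Fw := by
    apply continuous_pi
    intro i
    have c1 : Continuous (fun x : Cfg n d => f' x (bC i)) := by
      have : (fun x : Cfg n d => f' x (bC i)) = fun x => L (Gl (bC i) x) := by
        funext x
        show L (Stmt11Aux.G x (bC i)) = _
        rw [show Stmt11Aux.G x (bC i) = Gl x (bC i) from rfl, Gl_symm]
      rw [this]
      exact L.continuous.comp (Gl (bC i)).continuous_of_finiteDimensional
    exact c1.prodMk continuous_const
  have hN₀open : IsOpen {x : Cfg n d | LinearIndependent ℝ (Fw x)} :=
    isOpen_setOf_linearIndependent.preimage hFwc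
  have hpN₀ : LinearIndependent ℝ (Fw p) :=
    bC.linearIndependent.map' ((w' p).toLinearMap) (LinearMap.ker_eq_bot.mpr hinjp)
  have hinj_of_mem : ∀ x, LinearIndependent ℝ (Fw x) →
      Function.Injective ((w' x).toLinearMap) :=
    fun x hx => injective_of_indep_basis bC _ hx
  -- inverse function theorem
  have hwstrict' : HasStrictFDerivAt w ((eqv p hinjp : Cfg n d ≃L[ℝ] F₀ × K)
      : Cfg n d →L[ℝ] F₀ × K) p := by
    rw [heqv_coe p hinjp]
    exact hwstrict
  let φ : OpenPartialHomeomorph (Cfg n d) (F₀ × K) := hwstrict'.toOpenPartialHomeomorph w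
  have hφcoe : (φ : Cfg n d → F₀ × K) = w := rfl
  have hpsource : p ∈ φ.source := hwstrict'.mem_toOpenPartialHomeomorph_source
  -- the open set O around p
  let O : Set (Cfg n d) := φ.source ∩ {x | LinearIndependent ℝ (Fw x)}
  have hOopen : IsOpen O := φ.open_source.inter hN₀open
  have hpO : p ∈ O := ⟨hpsource, hpN₀⟩
  -- target-side neighborhood
  have hTopen : IsOpen (φ.target ∩ φ.symm ⁻¹' O) := φ.isOpen_inter_preimage_symm hOopen
  have hφpT : φ p ∈ φ.target ∩ φ.symm ⁻¹' O := by
    constructor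
    · exact φ.map_source hpsource
    · show φ.symm (φ p) ∈ O
      rw [φ.left_inv hpsource]
      exact hpO
  obtain ⟨ε, hεpos, hball⟩ := Metric.isOpen_iff.mp hTopen _ hφpT
  -- the convex set Z in K
  let Z : Set K := Metric.ball (projKC p) ε
  have hZconv : Convex ℝ Z := convex_ball _ _
  have hmem_of_Z : ∀ z ∈ Z, ((f p, z) : F₀ × K) ∈ φ.target ∩ φ.symm ⁻¹' O := by
    intro z hz
    apply hball
    rw [Metric.mem_ball]
    have : φ p = (f p, projKC p) := rfl
    rw [this, Prod.dist_eq]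
    simp only [dist_self]
    rw [max_eq_right dist_nonneg]
    exact hz
  -- the function h on Z is constant
  let hfun : K → Yy n := fun z => gmap (φ.symm (f p, z))
  have hconst : ∀ z ∈ Z, HasFDerivWithinAt hfun (0 : K →L[ℝ] Yy n) Z z := by
    intro z hz
    obtain ⟨hzt, hzO⟩ := hmem_of_Z z hz
    set x : Cfg n d := φ.symm (f p, z) with hxdef
    have hxO : x ∈ O := hzO
    have hxinj : Function.Injective ((w' x).toLinearMap) := hinj_of_mem x hxO.2
    -- derivative of φ.symm
    have hφx : HasFDerivAt φ ((eqv x hxinj : Cfg n d ≃L[ℝ] F₀ × K)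
        : Cfg n d →L[ℝ] F₀ × K) (φ.symm (f p, z)) := by
      rw [heqv_coe x hxinj]
      show HasFDerivAt w (w' x) x
      exact hw x
    have hsymm := φ.hasFDerivAt_symm hzt hφx
    -- derivative of the insertion map
    have hins : HasFDerivAt (fun z : K => ((f p, z) : F₀ × K))
        (ContinuousLinearMap.inr ℝ F₀ K) z := by
      have h1 : HasFDerivAt (fun z : K => ((f p, z) : F₀ × K))
          ((0 : K →L[ℝ] F₀).prod (ContinuousLinearMap.id ℝ K)) z :=
        (hasFDerivAt_const (f p) z).prodMk (hasFDerivAt_id z)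
      have h2 : ((0 : K →L[ℝ] F₀).prod (ContinuousLinearMap.id ℝ K))
          = ContinuousLinearMap.inr ℝ F₀ K := ContinuousLinearMap.ext fun u => rfl
      rw [h2] at h1
      exact h1
    have hcomp := ((hasFDerivAt_gmap x).comp (f p, z) hsymm).comp z hins
    -- the composite derivative vanishes
    have hzero : (((Stmt11Aux.G x).comp
          (((eqv x hxinj).symm : F₀ × K →L[ℝ] Cfg n d))).comp
          (ContinuousLinearMap.inr ℝ F₀ K)) = 0 := by
      apply ContinuousLinearMap.ext
      intro v
      set u : Cfg n d := (eqv x hxinj).symm (0, v) with hudef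
      have happ : w' x u = (0, v) := by
        have := (eqv x hxinj).apply_symm_apply (0, v)
        rw [← heqv_coe x hxinj]
        exact this
      have hu1 : f' x u = 0 := congrArg Prod.fst happ
      -- kernels coincide
      have hkx : LinearMap.ker (Gl x) = LinearMap.ker ((f' x).toLinearMap) := by
        apply Submodule.eq_of_le_of_finrank_le (hker_sub x)
        -- finrank of ker (f' x) = c ≤ finrank ker (Gl x)
        have hsurjx : Function.Surjective (f' x) := by
          intro y
          obtain ⟨u', hu'⟩ := (LinearMap.injective_iff_surjective_of_finrank_eq_finrank
            hdim).mp hxinj (y, 0)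
          exact ⟨u', congrArg Prod.fst hu'⟩
        have hrn := LinearMap.finrank_range_add_finrank_ker ((f' x).toLinearMap)
        have hrangex : LinearMap.range ((f' x).toLinearMap) = ⊤ :=
          LinearMap.range_eq_top.mpr hsurjx
        rw [hCfg_rank, hrangex, finrank_top] at hrn
        have hknx : Module.finrank ℝ (LinearMap.ker ((f' x).toLinearMap))
            = d * (d + 1) / 2 := by
          have := hrn.trans hprod_rank.symm
          exact Nat.add_left_cancel this
        have hgrn := LinearMap.finrank_range_add_finrank_ker (Gl x)
        rw [hCfg_rank] at hgrn
        have hgb := rank_bound hn x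
        omega
      have humem : u ∈ LinearMap.ker (Gl x) := by
        rw [hkx, LinearMap.mem_ker]
        exact hu1
      show Stmt11Aux.G x ((eqv x hxinj).symm ((0 : F₀), v)) = 0
      rw [show Stmt11Aux.G x ((eqv x hxinj).symm ((0:F₀), v)) = Gl x u from rfl]
      exact LinearMap.mem_ker.mp humem
    rw [hzero] at hcomp
    exact hcomp.hasFDerivWithinAt
  have hfun_const : ∀ z ∈ Z, hfun z = hfun (projKC p) := by
    intro z hz
    have hc : ∀ y ∈ Z, ‖(0 : K →L[ℝ] Yy n)‖ ≤ 0 := fun y _ => le_of_eq ContinuousLinearMap.opNorm_zero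
    have hcenter : projKC p ∈ Z := Metric.mem_ball_self hεpos
    have := hZconv.norm_image_sub_le_of_norm_hasFDerivWithin_le hconst hc hcenter hz
    have h0 : ‖hfun z - hfun (projKC p)‖ ≤ 0 := by simpa using this
    have := le_antisymm h0 (norm_nonneg _)
    rwa [norm_eq_zero, sub_eq_zero] at this
  -- the neighborhood U
  have hwcont : Continuous w := by
    apply Continuous.prodMk
    · exact L.continuous.comp continuous_gmap
    · exact projKC.continuous
  let U : Set (Cfg n d) := O ∩ w ⁻¹' (Metric.ball (w p) ε)
  have hUopen : IsOpen U := hOopen.inter ((Metric.isOpen_ball).preimage hwcont)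
  have hpU : p ∈ U := ⟨hpO, by
    rw [Set.mem_preimage, Metric.mem_ball, dist_self]
    exact hεpos⟩
  refine ⟨U, hUopen.mem_nhds hpU, ?_⟩
  intro q hq hequiv
  -- weak equivalence gives f q = f p
  have hgT : piT T (gmap q) = piT T (gmap p) := by
    funext t
    show (if t ∈ T then gmap q t else 0) = (if t ∈ T then gmap p t else 0)
    by_cases ht : t ∈ T
    · rw [if_pos ht, if_pos ht]
      exact (hequiv t ht).symm
    · rw [if_neg ht, if_neg ht]
  have hfq : f q = f p := by
    show prjC (piT T (gmap q)) = prjC (piT T (gmap p))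
    rw [hgT]
  -- q is in the chart and corresponds to parameter z := projKC q ∈ Z
  obtain ⟨hqO, hqball⟩ := hq
  have hzZ : projKC q ∈ Z := by
    have hd : dist (w q) (w p) < ε := Metric.mem_ball.mp hqball
    rw [Prod.dist_eq] at hd
    exact Metric.mem_ball.mpr (lt_of_le_of_lt (le_max_right _ _) hd)
  have hφq : φ q = ((f p, projKC q) : F₀ × K) := by
    rw [hφcoe]
    show (f q, projKC q) = (f p, projKC q)
    rw [hfq]
  have hqeq : q = φ.symm (f p, projKC q) := by
    rw [← hφq, φ.left_inv hqO.1]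
  -- conclude
  have hgq : gmap q = gmap p := by
    have h1 : gmap q = hfun (projKC q) := by
      show gmap q = gmap (φ.symm (f p, projKC q))
      rw [← hqeq]
    have h2 : hfun (projKC p) = gmap p := by
      show gmap (φ.symm (f p, projKC p)) = gmap p
      have : ((f p, projKC p) : F₀ × K) = φ p := rfl
      rw [this, φ.left_inv hpsource]
    rw [h1, hfun_const _ hzZ, h2]
  intro i j k
  exact congrFun hgq.symm (i, j, k)
end

section
/- Let G be a graph on n ≥ d+1 vertices. If (G,p) is infinitesimally weakly rigid for some generic configuration p ∈ ℝ^{nd}, then (G,q) is infinitesimally weakly rigid for every generic configuration q ∈ ℝ^{nd}; i.e., infinitesimal weak rigidity is a generic property of the graph. -/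
open RealInnerProductSpace Topology

/-- A configuration is generic if its `n*d` coordinates are algebraically independent
over the rationals. -/
def IsGeneric {n d : ℕ} (p : Fin n → EuclideanSpace ℝ (Fin d)) : Prop :=
  AlgebraicIndependent ℚ (fun x : Fin n × Fin d => p x.1 x.2)


section Aux
open Matrix Module Submodule Function


section MinorRank

variable {K : Type*} [Field K]

lemma exists_li_comp {V : Type*} [AddCommGroup V] [Module K V] {ι : Type*} [Fintype ι]
    (v : ι → V) (r : ℕ) (h : r ≤ finrank K (span K (Set.range v))) :
    ∃ t : Fin r → ι, LinearIndependent K (v ∘ t) := by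
  obtain ⟨b, hbsub, hspan, hli⟩ := exists_linearIndependent K (Set.range v)
  have hfin : b.Finite := (Set.finite_range v).subset hbsub
  haveI : Fintype b := hfin.fintype
  have hcard : finrank K (span K b) = Fintype.card b := by
    have := finrank_span_eq_card (R := K) (b := (Subtype.val : b → V)) hli
    rwa [Subtype.range_coe] at this
  have hr : r ≤ Fintype.card b := by
    rw [← hcard, hspan]; simpa using h
  obtain ⟨e⟩ : Nonempty (Fin r ↪ b) := by
    rw [Function.Embedding.nonempty_iff_card_le]; simpa using hr
  have hmem : ∀ a : Fin r, ((e a : V) ∈ Set.range v) := fun a => hbsub (e a).2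
  choose t ht using fun a => hmem a
  refine ⟨t, ?_⟩
  have : v ∘ t = Subtype.val ∘ e := funext fun a => ht a
  rw [this]
  exact hli.comp e e.injective

lemma det_ne_zero_of_rows_li {r : Type*} [Fintype r] [DecidableEq r] (C : Matrix r r K)
    (h : LinearIndependent K (fun i => C i)) : C.det ≠ 0 := by
  intro h0
  rw [← Matrix.det_transpose] at h0
  obtain ⟨v, hv, hmul⟩ := Matrix.exists_mulVec_eq_zero_iff.mpr h0
  apply hv
  have hsum : ∑ i, v i • C i = 0 := by
    funext j
    have : (Cᵀ *ᵥ v) j = 0 := by rw [hmul]; rfl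
    simpa [Matrix.mulVec, dotProduct, Finset.sum_apply, mul_comm] using this
  have := Fintype.linearIndependent_iff.mp h v hsum
  funext i; exact this i

lemma rank_submatrix_le' {m n m' n' : Type*} [Fintype m] [Fintype n] [Fintype m'] [Fintype n']
    [DecidableEq m] [DecidableEq n] (A : Matrix m n K) (s : m' → m) (t : n' → n) :
    (A.submatrix s t).rank ≤ A.rank := by
  have hEq : A.submatrix s t =
      ((1 : Matrix m m K).submatrix s id) * A * ((1 : Matrix n n K).submatrix id t) := by
    ext i j
    simp [Matrix.mul_apply, Matrix.one_apply, Finset.sum_ite_eq, Finset.sum_ite_eq']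
  rw [hEq]
  exact (Matrix.rank_mul_le_left _ _).trans (Matrix.rank_mul_le_right _ _)

theorem le_rank_iff_det {m n : Type*} [Fintype m] [Fintype n] [DecidableEq m] [DecidableEq n]
    (A : Matrix m n K) (r : ℕ) :
    r ≤ A.rank ↔ ∃ (s : Fin r → m) (t : Fin r → n), (A.submatrix s t).det ≠ 0 := by
  constructor
  · intro h
    obtain ⟨t, ht⟩ := exists_li_comp (fun j => Aᵀ j) r
      (by exact h.trans_eq (Matrix.rank_eq_finrank_span_cols A))
    set B : Matrix m (Fin r) K := A.submatrix id t with hB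
    have hBrank : B.rank = r := by
      have hBT : (fun j => Bᵀ j) = (fun j => Aᵀ j) ∘ t := by
        funext j; funext i; rfl
      have : B.rank = finrank K (span K (Set.range fun j => Bᵀ j)) :=
        Matrix.rank_eq_finrank_span_cols B
      rw [this, hBT, finrank_span_eq_card ht, Fintype.card_fin]
    have hrows : r ≤ finrank K (span K (Set.range fun i => B i)) := by
      have h1 : Bᵀ.rank = finrank K (span K (Set.range fun i => Bᵀᵀ i)) :=
        Matrix.rank_eq_finrank_span_cols Bᵀ
      have h2 : Bᵀ.rank = B.rank := Matrix.rank_transpose B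
      rw [Matrix.transpose_transpose, h2, hBrank] at h1
      omega
    obtain ⟨s, hs⟩ := exists_li_comp (fun i => B i) r hrows
    refine ⟨s, t, det_ne_zero_of_rows_li _ ?_⟩
    have : (fun a => (A.submatrix s t) a) = (fun i => B i) ∘ s := by
      funext a; rfl
    rw [this]; exact hs
  · rintro ⟨s, t, hdet⟩
    have hunit : IsUnit (A.submatrix s t) :=
      (Matrix.isUnit_iff_isUnit_det _).mpr (isUnit_iff_ne_zero.mpr hdet)
    have := Matrix.rank_of_isUnit _ hunit
    calc r = (A.submatrix s t).rank := by rw [this, Fintype.card_fin]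
    _ ≤ A.rank := rank_submatrix_le' A s t

end MinorRank


lemma le_rank_map_iff {R K : Type*} [CommRing R] [Field K]
    {m n : Type*} [Fintype m] [Fintype n] [DecidableEq m] [DecidableEq n]
    (J : Matrix m n R) (h : R →+* K) (hinj : Injective h) (r : ℕ) :
    r ≤ (J.map h).rank ↔ ∃ (s : Fin r → m) (t : Fin r → n), (J.submatrix s t).det ≠ 0 := by
  rw [le_rank_iff_det]
  apply exists_congr; intro s; apply exists_congr; intro t
  rw [Matrix.submatrix_map]
  rw [show ((J.submatrix s t).map h).det = h (J.submatrix s t).det from (RingHom.map_det h _).symm]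
  exact not_congr (map_eq_zero_iff h hinj)

lemma rank_map_eq_rank_map {R K L : Type*} [CommRing R] [Field K] [Field L]
    {m n : Type*} [Fintype m] [Fintype n] [DecidableEq m] [DecidableEq n]
    (J : Matrix m n R) (f : R →+* K) (g : R →+* L)
    (hf : Injective f) (hg : Injective g) : (J.map f).rank = (J.map g).rank := by
  have e : ∀ r : ℕ, r ≤ (J.map f).rank ↔ r ≤ (J.map g).rank := fun r =>
    (le_rank_map_iff J f hf r).trans (le_rank_map_iff J g hg r).symm
  exact le_antisymm ((e _).mp le_rfl) ((e _).mpr le_rfl)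

end Aux

open Classical MvPolynomial in
noncomputable def polyJac {n d : ℕ} (T : Set (Fin n × Fin n × Fin n)) :
    Matrix (Fin n × Fin n × Fin n) (Fin n × Fin d) (MvPolynomial (Fin n × Fin d) ℚ) :=
  Matrix.of fun t v =>
    if t ∈ T then
      ((if t.1 = v.1 then 1 else 0) - (if t.2.2 = v.1 then 1 else 0))
        * (X (t.1, v.2) - X (t.2.1, v.2))
      + ((if t.1 = v.1 then 1 else 0) - (if t.2.1 = v.1 then 1 else 0))
        * (X (t.1, v.2) - X (t.2.2, v.2))
    else 0

open Classical in
noncomputable def derivL {n d : ℕ} (T : Set (Fin n × Fin n × Fin n))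
    (p : Fin n → EuclideanSpace ℝ (Fin d)) (t : Fin n × Fin n × Fin n) :
    (Fin n → EuclideanSpace ℝ (Fin d)) →L[ℝ] ℝ :=
  if t ∈ T then
    (innerSL ℝ (p t.1 - p t.2.1)).comp
        ((ContinuousLinearMap.proj t.1 : ((Fin n → EuclideanSpace ℝ (Fin d))) →L[ℝ]
          EuclideanSpace ℝ (Fin d)) - ContinuousLinearMap.proj t.2.2)
      + (innerSL ℝ (p t.1 - p t.2.2)).comp
        ((ContinuousLinearMap.proj t.1 : ((Fin n → EuclideanSpace ℝ (Fin d))) →L[ℝ]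
          EuclideanSpace ℝ (Fin d)) - ContinuousLinearMap.proj t.2.1)
  else 0

lemma hasFDerivAt_weakRigidityFun {n d : ℕ} (T : Set (Fin n × Fin n × Fin n))
    (p : Fin n → EuclideanSpace ℝ (Fin d)) :
    HasFDerivAt (weakRigidityFun T) (ContinuousLinearMap.pi (derivL T p)) p := by
  rw [hasFDerivAt_pi']
  intro t
  rw [ContinuousLinearMap.proj_pi]
  by_cases ht : t ∈ T
  · have hfun : (fun x : Fin n → EuclideanSpace ℝ (Fin d) => weakRigidityFun T x t)
        = fun x => ⟪x t.1 - x t.2.1, x t.1 - x t.2.2⟫ := by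
      funext x; simp [weakRigidityFun, ht]
    rw [hfun]
    have h0 : ∀ i : Fin n, HasFDerivAt (fun x : Fin n → EuclideanSpace ℝ (Fin d) => x i)
        (ContinuousLinearMap.proj i : (Fin n → EuclideanSpace ℝ (Fin d)) →L[ℝ]
          EuclideanSpace ℝ (Fin d)) p := fun i => hasFDerivAt_apply (𝕜 := ℝ) i p
    have h1 : HasFDerivAt (fun x : Fin n → EuclideanSpace ℝ (Fin d) => x t.1 - x t.2.1)
        (ContinuousLinearMap.proj t.1 - ContinuousLinearMap.proj t.2.1) p :=
      (h0 t.1).sub (h0 t.2.1)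
    have h2 : HasFDerivAt (fun x : Fin n → EuclideanSpace ℝ (Fin d) => x t.1 - x t.2.2)
        (ContinuousLinearMap.proj t.1 - ContinuousLinearMap.proj t.2.2) p :=
      (h0 t.1).sub (h0 t.2.2)
    have := h1.inner ℝ h2
    refine this.congr_fderiv ?_
    ext v
    simp only [derivL, if_pos ht, ContinuousLinearMap.add_apply, ContinuousLinearMap.comp_apply,
      ContinuousLinearMap.sub_apply, ContinuousLinearMap.proj_apply, innerSL_apply_apply,
      fderivInnerCLM_apply, ContinuousLinearMap.prod_apply]
    rw [real_inner_comm (p t.1 - p t.2.2)]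
  · have hfun : (fun x : Fin n → EuclideanSpace ℝ (Fin d) => weakRigidityFun T x t)
        = fun _ => (0 : ℝ) := by
      funext x; simp [weakRigidityFun, ht]
    rw [hfun]
    have : derivL T p t = 0 := by simp [derivL, ht]
    rw [this]
    exact hasFDerivAt_const _ _

open MvPolynomial in
lemma jacRank_eq_rank_polyJac {n d : ℕ} (T : Set (Fin n × Fin n × Fin n))
    (p : Fin n → EuclideanSpace ℝ (Fin d)) :
    jacRank (weakRigidityFun T) p
      = ((polyJac T).map (aeval (fun x : Fin n × Fin d => p x.1 x.2)).toRingHom).rank := by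
  classical
  set pc : Fin n × Fin d → ℝ := fun x => p x.1 x.2 with hpc
  let bDom : Module.Basis (Fin n × Fin d) ℝ (Fin n → EuclideanSpace ℝ (Fin d)) :=
    (Pi.basis fun _ : Fin n => (EuclideanSpace.basisFun (Fin d) ℝ).toBasis).reindex
      (Equiv.sigmaEquivProd (Fin n) (Fin d))
  let bCod := Pi.basisFun ℝ (Fin n × Fin n × Fin n)
  have hD : fderiv ℝ (weakRigidityFun T) p = ContinuousLinearMap.pi (derivL T p) :=
    (hasFDerivAt_weakRigidityFun T p).fderiv
  set lin := (ContinuousLinearMap.pi (derivL T p)).toLinearMap with hlin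
  have hM : LinearMap.toMatrix bDom bCod lin = (polyJac T).map (aeval pc).toRingHom := by
    ext t v
    rw [LinearMap.toMatrix_apply]
    have hb : bDom v = Pi.single v.1 (EuclideanSpace.single v.2 1) := by
      simp [bDom, Module.Basis.reindex_apply, Pi.basis_apply]
    rw [hb]
    have hrepr : ∀ x : (Fin n × Fin n × Fin n) → ℝ, bCod.repr x t = x t := fun x => by
      simp [bCod]
    rw [hrepr]
    show derivL T p t (Pi.single v.1 (EuclideanSpace.single v.2 1)) = _
    by_cases ht : t ∈ T
    · simp only [derivL, if_pos ht, polyJac, Matrix.map_apply, Matrix.of_apply,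
        ContinuousLinearMap.add_apply, ContinuousLinearMap.comp_apply,
        ContinuousLinearMap.sub_apply, ContinuousLinearMap.proj_apply, innerSL_apply_apply,
        AlgHom.coe_toRingHom, map_add, map_mul, map_sub, map_one, map_zero,
        apply_ite (aeval pc), aeval_X]
      simp only [AlgHom.toRingHom_eq_coe, RingHom.coe_coe, apply_ite (aeval pc), map_one,
        map_zero, aeval_X, hpc]
      simp only [Pi.single_apply, apply_ite (fun y => (inner (p t.1) y : ℝ)),
        apply_ite (fun y => (inner (p t.2.1) y : ℝ)),
        apply_ite (fun y => (inner (p t.2.2) y : ℝ)), inner_zero_right,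
        EuclideanSpace.inner_single_right, one_mul, conj_trivial]
      split_ifs <;> simp [EuclideanSpace.inner_single_right] <;> ring
    · simp [derivL, ht, polyJac]
  rw [jacRank, hD]
  rw [show (ContinuousLinearMap.pi (derivL T p)).toLinearMap = lin from rfl]
  rw [← hM]
  rw [Matrix.rank_eq_finrank_range_toLin (LinearMap.toMatrix bDom bCod lin) bCod bDom,
    Matrix.toLin_toMatrix]

/-- Infinitesimal weak rigidity is a generic property: if `(G,p)` is
infinitesimally weakly rigid for some generic configuration `p`, then `(G,q)` is
infinitesimally weakly rigid for every generic configuration `q`. -/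
theorem stmt12 {n d : ℕ} (hn : d + 1 ≤ n) (G : SimpleGraph (Fin n))
    (p : Fin n → EuclideanSpace ℝ (Fin d)) (hp : IsGeneric p)
    (h : IsInfWeaklyRigid G p)
    (q : Fin n → EuclideanSpace ℝ (Fin d)) (hq : IsGeneric q) :
    IsInfWeaklyRigid G q := by
  obtain ⟨T, hT, hrank⟩ := h
  refine ⟨T, hT, ?_⟩
  have hrk : jacRank (weakRigidityFun T) q = jacRank (weakRigidityFun T) p := by
    rw [jacRank_eq_rank_polyJac, jacRank_eq_rank_polyJac]
    exact rank_map_eq_rank_map (polyJac T) _ _ hq hp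
  omega
end
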